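/- In B_3/Z with Σ as above, for all u₁, v, w ∈ Σ: if v·w = u₁ in B_3/Z, then Next(w) = Next(u₁); moreover, for all u₁ ∈ Σ, Next(u₁) = Next(ι(u₁)Δ), where ι(u₁)Δ denotes the element of Σ obtained by applying the involution ι and multiplying by Δ. -/

import Mathlib

/-- The braid relation `aba = bab` (generator `false` is `a`, `true` is `b`). -/
def braidRel : Set (FreeGroup Bool) :=
  {FreeGroup.of false * FreeGroup.of true * FreeGroup.of false *
    (FreeGroup.of true * FreeGroup.of false * FreeGroup.of true)⁻¹}

/-- The braid group on three strands `B₃ = ⟨a, b ∣ aba = bab⟩`. -/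
def B3 : Type := PresentedGroup braidRel

instance : Group B3 := inferInstanceAs (Group (PresentedGroup braidRel))

/-- The generator `a` of `B₃`. -/
def ga : B3 := PresentedGroup.of false

/-- The generator `b` of `B₃`. -/
def gb : B3 := PresentedGroup.of true

/-- The Garside element `Δ = aba` of `B₃`. -/
def gΔ : B3 := ga * gb * ga
/-- The (normal, since `Δ²` is central) subgroup `Z = ⟨Δ²⟩` of `B₃`. -/
def Zc : Subgroup B3 := Subgroup.normalClosure {gΔ ^ 2}

instance : Zc.Normal := Subgroup.normalClosure_normal

/-- The quotient `B₃/Z` of the braid group by its center. -/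
def B3Z : Type := B3 ⧸ Zc

instance : Group B3Z := inferInstanceAs (Group (B3 ⧸ Zc))

/-- Image of `a` in `B₃/Z`. -/
def qa : B3Z := (QuotientGroup.mk' Zc) ga

/-- Image of `b` in `B₃/Z`. -/
def qb : B3Z := (QuotientGroup.mk' Zc) gb

/-- Image of `Δ = aba` in `B₃/Z`. -/
def qΔ : B3Z := qa * qb * qa
/-- Labels for the eight elements of `Σ = {a, b, ab, ba, aΔ, bΔ, abΔ, baΔ} ⊆ B₃/Z`. -/
inductive Lbl | a | b | ab | ba | aD | bD | abD | baD
deriving DecidableEq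

instance instFintypeLbl : Fintype Lbl where
  elems := {.a, .b, .ab, .ba, .aD, .bD, .abD, .baD}
  complete := fun x => by cases x <;> simp

/-- The element of `B₃/Z` corresponding to a label. -/
def Lbl.val : Lbl → B3Z
  | .a => qa
  | .b => qb
  | .ab => qa * qb
  | .ba => qb * qa
  | .aD => qa * qΔ
  | .bD => qb * qΔ
  | .abD => qa * qb * qΔ
  | .baD => qb * qa * qΔ

/-- `First : Σ → {a, b}` (with `false` standing for `a` and `true` for `b`). -/
def Lbl.first : Lbl → Bool
  | .a | .ab | .aD | .abD => false
  | .b | .ba | .bD | .baD => true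

/-- `Last : Σ → {a, b}` as in Table 1 of the paper. -/
def Lbl.last : Lbl → Bool
  | .a | .ba | .bD | .abD => false
  | .b | .ab | .aD | .baD => true

/-- The involution `ι` on `Σ`. -/
def Lbl.iota : Lbl → Lbl
  | .a => .b | .b => .a
  | .ab => .ba | .ba => .ab
  | .aD => .bD | .bD => .aD
  | .abD => .baD | .baD => .abD

/-- The label of the element `ι(u)·Δ` of `Σ` (using `Δ² = 1` in `B₃/Z`). -/
def Lbl.iotaD : Lbl → Lbl
  | .a => .bD | .b => .aD
  | .ab => .baD | .ba => .abD
  | .aD => .b | .bD => .a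
  | .abD => .ba | .baD => .ab

/-- `Next(u) = {v ∈ Σ : Last(u) = First(v)}`. -/
def NextL (u : Lbl) : Finset Lbl := Finset.univ.filter fun v => u.last = v.first


/-- Image of `a`: the 4-cycle `(1 2 3 4)` in `S₅`. -/
def pa : Equiv.Perm (Fin 5) := ⟨![0,2,3,4,1], ![0,4,1,2,3], by decide, by decide⟩

/-- Image of `b`. -/
def pb : Equiv.Perm (Fin 5) := ⟨![0,2,4,1,3], ![0,3,1,4,2], by decide, by decide⟩

def fgen : Bool → Equiv.Perm (Fin 5) := fun x => if x then pb else pa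

lemma braid_rels_hold : ∀ r ∈ braidRel, FreeGroup.lift fgen r = 1 := by
  intro r hr
  simp only [braidRel, Set.mem_singleton_iff] at hr
  subst hr
  simp only [map_mul, map_inv, FreeGroup.lift_apply_of, fgen]
  decide

def phi1 : B3 →* Equiv.Perm (Fin 5) := PresentedGroup.toGroup braid_rels_hold

lemma phi1_a : phi1 ga = pa := PresentedGroup.toGroup.of braid_rels_hold

lemma phi1_b : phi1 gb = pb := PresentedGroup.toGroup.of braid_rels_hold

lemma Zc_le_ker : Zc ≤ phi1.ker := by
  apply Subgroup.normalClosure_le_normal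
  intro x hx
  simp only [Set.mem_singleton_iff] at hx
  subst hx
  simp only [SetLike.mem_coe, MonoidHom.mem_ker, gΔ, map_pow, map_mul, phi1_a, phi1_b]
  decide

def phi : B3Z →* Equiv.Perm (Fin 5) :=
  QuotientGroup.lift Zc phi1 fun x hx => MonoidHom.mem_ker.mp (Zc_le_ker hx)

lemma phi_qa : phi qa = pa := phi1_a
lemma phi_qb : phi qb = pb := phi1_b

/-- Image of each label under `phi`, computed concretely. -/
def Lbl.pval : Lbl → Equiv.Perm (Fin 5)
  | .a => pa
  | .b => pb
  | .ab => pa * pb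
  | .ba => pb * pa
  | .aD => pa * (pa * pb * pa)
  | .bD => pb * (pa * pb * pa)
  | .abD => pa * pb * (pa * pb * pa)
  | .baD => pb * pa * (pa * pb * pa)

lemma phi_val (l : Lbl) : phi l.val = l.pval := by
  cases l <;>
    simp only [Lbl.val, Lbl.pval, qΔ, map_mul, phi_qa, phi_qb]

lemma sep : ∀ u v w : Lbl, w.last ≠ u.last → v.pval * w.pval ≠ u.pval := by decide

lemma last_eq_next (u w : Lbl) (h : w.last = u.last) : NextL w = NextL u := by
  simp only [NextL, h]

/-- If `v·w = u₁` in `B₃/Z` then `Next(w) = Next(u₁)`; moreover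
`Next(u₁) = Next(ι(u₁)Δ)` for every `u₁ ∈ Σ`. -/
theorem next_of_product_and_iotaD :
    (∀ u₁ v w : Lbl, v.val * w.val = u₁.val → NextL w = NextL u₁) ∧
    ∀ u₁ : Lbl, NextL u₁ = NextL u₁.iotaD := by
  constructor
  · intro u₁ v w h
    by_cases hl : w.last = u₁.last
    · exact last_eq_next u₁ w hl
    · exact absurd (by simpa only [map_mul, phi_val] using congrArg phi h) (sep u₁ v w hl)
  · decide
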